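/- arXiv:1505.05910 — 7 statements merged into one kernel-verified Lean document; each statement's English description precedes it below -/
import Mathlib

section
/- Let s, m_1, m_2 be nonnegative integers with m_1 + m_2 ≤ s. Then the number of quadruples (k_1, k_2, k_3, k_4) of nonnegative integers satisfying k_1 + k_2 ≤ s, 2k_3 + k_4 ≤ k_2, k_2 − 2k_3 = m_1, and s − k_1 − k_2 + k_3 = m_2 is exactly (m_1 + 1)·(min(m_2, s − m_1 − m_2) + 1). -/
/-- The number of quadruples `(k₁, k₂, k₃, k₄)` of nonnegative integers with
`k₁ + k₂ ≤ s`, `2k₃ + k₄ ≤ k₂`, `k₂ - 2k₃ = m₁` and `s - k₁ - k₂ + k₃ = m₂` is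
`(m₁ + 1) * (min m₂ (s - m₁ - m₂) + 1)`. -/
theorem stmt1 (s m1 m2 : ℕ) (h : m1 + m2 ≤ s) :
    Nat.card {k : ℕ × ℕ × ℕ × ℕ //
      k.1 + k.2.1 ≤ s ∧ 2 * k.2.2.1 + k.2.2.2 ≤ k.2.1 ∧
      k.2.1 - 2 * k.2.2.1 = m1 ∧ s - k.1 - k.2.1 + k.2.2.1 = m2} =
    (m1 + 1) * (min m2 (s - m1 - m2) + 1) := by
  have e : {k : ℕ × ℕ × ℕ × ℕ //
      k.1 + k.2.1 ≤ s ∧ 2 * k.2.2.1 + k.2.2.2 ≤ k.2.1 ∧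
      k.2.1 - 2 * k.2.2.1 = m1 ∧ s - k.1 - k.2.1 + k.2.2.1 = m2} ≃
      Fin (m1 + 1) × Fin (min m2 (s - m1 - m2) + 1) :=
    { toFun := fun ⟨⟨k1, k2, k3, k4⟩, h1, h2, h3, h4⟩ =>
        (⟨k4, by simp only at h1 h2 h3 h4; omega⟩,
         ⟨k3, by simp only at h1 h2 h3 h4; omega⟩)
      invFun := fun p => ⟨(s - m1 - m2 - p.2, m1 + 2 * p.2, p.2, p.1), by
        obtain ⟨⟨a, ha⟩, ⟨b, hb⟩⟩ := p
        refine ⟨?_, ?_, ?_, ?_⟩ <;> simp only <;> omega⟩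
      left_inv := fun ⟨⟨k1, k2, k3, k4⟩, h1, h2, h3, h4⟩ => by
        simp only at h1 h2 h3 h4
        apply Subtype.ext
        simp only [Prod.mk.injEq]
        exact ⟨by omega, by omega, trivial⟩
      right_inv := fun p => rfl }
  rw [Nat.card_congr e]
  simp
end

section
/- Fix a nonnegative integer s. Let K_s = {(k_1,k_2,k_3,k_4) ∈ ℤ_{≥0}^4 : k_1 + k_2 ≤ s and 2k_3 + k_4 ≤ k_2} and let A_s = {(r_1,r_2,r_3,r_4) ∈ ℤ_{≥0}^4 : r_3 ≤ r_1 and r_1 + r_2 + r_3 + r_4 ≤ s}. Then the map Ψ(k_1,k_2,k_3,k_4) = (k_2 − k_3 − k_4, k_4, k_3, k_1) is a well-defined bijection from K_s onto A_s, and writing Ψ(k_1,k_2,k_3,k_4) = (r_1,r_2,r_3,r_4) one has r_1 + 2r_2 + 2r_3 + 3r_4 = 3k_1 + k_2 + k_3 + k_4, r_1 + r_2 − r_3 = k_2 − 2k_3, and s − r_1 − r_2 − r_4 = s − k_1 − k_2 + k_3. -/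
/-- `K_s = {(k₁,k₂,k₃,k₄) ∈ ℤ_{≥0}⁴ : k₁ + k₂ ≤ s ∧ 2k₃ + k₄ ≤ k₂}`. -/
def Kset (s : ℕ) : Set (ℕ × ℕ × ℕ × ℕ) :=
  {k | k.1 + k.2.1 ≤ s ∧ 2 * k.2.2.1 + k.2.2.2 ≤ k.2.1}

/-- `A_s = {(r₁,r₂,r₃,r₄) ∈ ℤ_{≥0}⁴ : r₃ ≤ r₁ ∧ r₁ + r₂ + r₃ + r₄ ≤ s}`. -/
def Aset (s : ℕ) : Set (ℕ × ℕ × ℕ × ℕ) :=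
  {r | r.2.2.1 ≤ r.1 ∧ r.1 + r.2.1 + r.2.2.1 + r.2.2.2 ≤ s}

/-- `Ψ(k₁,k₂,k₃,k₄) = (k₂ - k₃ - k₄, k₄, k₃, k₁)`. -/
def Psi (k : ℕ × ℕ × ℕ × ℕ) : ℕ × ℕ × ℕ × ℕ :=
  (k.2.1 - k.2.2.1 - k.2.2.2, k.2.2.2, k.2.2.1, k.1)

/-- `Ψ` is a bijection from `K_s` onto `A_s` sending the cocharge statistic
`3k₁ + k₂ + k₃ + k₄` to the grading `r₁ + 2r₂ + 2r₃ + 3r₄`, and matching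
the weights. -/
theorem stmt2 (s : ℕ) :
    Set.BijOn Psi (Kset s) (Aset s) ∧
    ∀ k ∈ Kset s,
      (Psi k).1 + 2 * (Psi k).2.1 + 2 * (Psi k).2.2.1 + 3 * (Psi k).2.2.2 =
        3 * k.1 + k.2.1 + k.2.2.1 + k.2.2.2 ∧
      (Psi k).1 + (Psi k).2.1 - (Psi k).2.2.1 = k.2.1 - 2 * k.2.2.1 ∧
      s - (Psi k).1 - (Psi k).2.1 - (Psi k).2.2.2 = s - k.1 - k.2.1 + k.2.2.1 := by
  refine ⟨⟨?_, ?_, ?_⟩, ?_⟩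
  · rintro ⟨k1,k2,k3,k4⟩ ⟨h1,h2⟩
    simp only [Kset, Aset, Psi, Set.mem_setOf_eq] at *
    omega
  · rintro ⟨a1,a2,a3,a4⟩ ⟨h1,h2⟩ ⟨b1,b2,b3,b4⟩ ⟨g1,g2⟩ heq
    simp only [Kset, Psi, Set.mem_setOf_eq, Prod.mk.injEq] at *
    omega
  · rintro ⟨r1,r2,r3,r4⟩ hr
    simp only [Aset, Set.mem_setOf_eq] at hr
    obtain ⟨h1,h2⟩ := hr
    refine ⟨(r4, r1+r2+r3, r3, r2), ?_, ?_⟩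
    · simp only [Kset, Set.mem_setOf_eq]; omega
    · simp [Psi, Prod.mk.injEq]
      try omega
  · rintro ⟨k1,k2,k3,k4⟩ hk
    simp only [Kset, Set.mem_setOf_eq] at hk
    simp only [Psi]
    omega
end

section
/- In type D_4^{(3)} let the classical Cartan matrix entries be A_{11} = A_{22} = 2, A_{12} = −3, A_{21} = −1. Fix nonnegative integers s, k_1, k_2, k_3 with k_1 + k_2 ≤ s, and set k = k_1 + k_2 + k_3. Let L be the multiplicity array with L_s^{(2)} = 1 and all other entries 0, and let ν^{(1)} be the partition (k, k_1, k_1) and ν^{(2)} the partition (k_1+k_2, k_1). Then the vacancy numbers satisfy, for every i ≥ 0: p_i^{(1)} = 3·min(i, k_1+k_2) − 2·min(i, k) − min(i, k_1) and p_i^{(2)} = min(i, s) + min(i, k) − 2·min(i, k_1+k_2). In particular p_k^{(1)} = k_2 − 2k_3, p_{k_1}^{(1)} = 0, p_{k_1+k_2}^{(2)} = 0, p_{k_1}^{(2)} = 0, and p_i^{(2)} = 0 for every i ≤ k_1 + k_2. -/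
/-- The classical Cartan matrix of the subalgebra `G₂` of `D₄⁽³⁾` (indices `0,1`
standing for `1,2`): `A₁₁ = A₂₂ = 2`, `A₁₂ = -3`, `A₂₁ = -1`. -/
def cartanD43 : Fin 2 → Fin 2 → ℤ :=
  fun a b => if a = b then 2 else if a = 0 then -3 else -1

/-- The vacancy numbers
`p_i^{(a)} = Σ_j min(i,j) L_j^{(a)} - Σ_{b,j} A_{ab} min(i,j) m_j^{(b)}`. -/
noncomputable def vacancy (A : Fin 2 → Fin 2 → ℤ) (L m : Fin 2 → ℕ → ℕ)
    (a : Fin 2) (i : ℕ) : ℤ :=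
  (∑ᶠ j : ℕ, ((min i j : ℕ) : ℤ) * (L a j : ℤ)) -
    ∑ b : Fin 2, ∑ᶠ j : ℕ, A a b * ((min i j : ℕ) : ℤ) * (m b j : ℤ)

lemma finsum_count (f : ℕ → ℤ) (M : Multiset ℕ) :
    ∑ᶠ j : ℕ, f j * (M.count j : ℤ) = (M.map f).sum := by
  induction M using Multiset.induction with
  | empty => simp
  | cons a M ih =>
    have h1 : (Function.support fun j => f j * (M.count j : ℤ)).Finite := by
      apply Set.Finite.subset M.toFinset.finite_toSet
      intro j hj
      simp only [Function.mem_support] at hj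
      simp only [Finset.coe_sort_coe, Multiset.mem_toFinset, Finset.mem_coe]
      by_contra hc
      simp [Multiset.count_eq_zero_of_notMem hc] at hj
    have h2 : (Function.support fun j => if j = a then f a else 0).Finite := by
      apply Set.Finite.subset (Set.finite_singleton a)
      intro j hj
      by_contra hc
      exact hj (if_neg (by simpa using hc))
    have key : ∀ j : ℕ, f j * ((a ::ₘ M).count j : ℤ)
        = (fun j => f j * (M.count j : ℤ)) j + (fun j => if j = a then f a else 0) j := by
      intro j
      rcases eq_or_ne j a with rfl | hne
      · simp [Multiset.count_cons_self]; ring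
      · simp [Multiset.count_cons_of_ne hne, hne]
    calc ∑ᶠ j : ℕ, f j * ((a ::ₘ M).count j : ℤ)
        = ∑ᶠ j : ℕ, ((fun j => f j * (M.count j : ℤ)) j + (fun j => if j = a then f a else 0) j) := by
          exact finsum_congr key
      _ = (∑ᶠ j : ℕ, f j * (M.count j : ℤ)) + ∑ᶠ j : ℕ, (if j = a then f a else 0) :=
          finsum_add_distrib h1 h2
      _ = (M.map f).sum + f a := by
          rw [ih, finsum_eq_single _ a (by intro x hx; simp [hx])]
          simp
      _ = ((a ::ₘ M).map f).sum := by simp; ring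


/-- Vacancy numbers of the configuration `ν⁽¹⁾ = (k, k₁, k₁)`, `ν⁽²⁾ = (k₁+k₂, k₁)`
with multiplicity array `L_s^{(2)} = 1`, where `k = k₁ + k₂ + k₃`. -/
theorem stmt3 (s k1 k2 k3 : ℕ) (h : k1 + k2 ≤ s) :
    let k := k1 + k2 + k3
    let L : Fin 2 → ℕ → ℕ := fun a i => if a = 1 ∧ i = s then 1 else 0
    let m : Fin 2 → ℕ → ℕ := fun a i =>
      if a = 0 then Multiset.count i ({k, k1, k1} : Multiset ℕ)
      else Multiset.count i ({k1 + k2, k1} : Multiset ℕ)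
    (∀ i : ℕ, vacancy cartanD43 L m 0 i =
        3 * ((min i (k1 + k2) : ℕ) : ℤ) - 2 * ((min i k : ℕ) : ℤ)
          - ((min i k1 : ℕ) : ℤ)) ∧
    (∀ i : ℕ, vacancy cartanD43 L m 1 i =
        ((min i s : ℕ) : ℤ) + ((min i k : ℕ) : ℤ)
          - 2 * ((min i (k1 + k2) : ℕ) : ℤ)) ∧
    vacancy cartanD43 L m 0 k = (k2 : ℤ) - 2 * (k3 : ℤ) ∧
    vacancy cartanD43 L m 0 k1 = 0 ∧
    vacancy cartanD43 L m 1 (k1 + k2) = 0 ∧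
    vacancy cartanD43 L m 1 k1 = 0 ∧
    ∀ i : ℕ, i ≤ k1 + k2 → vacancy cartanD43 L m 1 i = 0 := by
  intro k L m
  have hL0 : ∀ i : ℕ, (∑ᶠ j : ℕ, ((min i j : ℕ) : ℤ) * (L 0 j : ℤ)) = 0 := by
    intro i
    have : ∀ j : ℕ, ((min i j : ℕ) : ℤ) * (L 0 j : ℤ) = 0 := by
      intro j; simp [L]
    rw [finsum_congr this, finsum_zero]
  have hL1 : ∀ i : ℕ, (∑ᶠ j : ℕ, ((min i j : ℕ) : ℤ) * (L 1 j : ℤ))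
      = ((min i s : ℕ) : ℤ) := by
    intro i
    rw [finsum_eq_single _ s]
    · simp [L]
    · intro x hx; simp [L, hx]
  have hm : ∀ (c : ℤ) (i : ℕ) (b : Fin 2) (M : Multiset ℕ),
      (∀ j, (m b j : ℤ) = (M.count j : ℤ)) →
      (∑ᶠ j : ℕ, c * ((min i j : ℕ) : ℤ) * (m b j : ℤ))
        = (M.map (fun j => c * ((min i j : ℕ) : ℤ))).sum := by
    intro c i b M hM
    rw [finsum_congr (fun j => by rw [hM j] :
      ∀ j : ℕ, c * ((min i j : ℕ) : ℤ) * (m b j : ℤ)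
        = (fun j => c * ((min i j : ℕ) : ℤ)) j * (M.count j : ℤ))]
    exact finsum_count _ M
  have hm0 : ∀ (c : ℤ) (i : ℕ),
      (∑ᶠ j : ℕ, c * ((min i j : ℕ) : ℤ) * (m 0 j : ℤ))
        = c * ((min i k : ℕ) : ℤ) + 2 * (c * ((min i k1 : ℕ) : ℤ)) := by
    intro c i
    rw [hm c i 0 ({k, k1, k1} : Multiset ℕ) (fun j => by simp [m])]
    simp; ring
  have hm1 : ∀ (c : ℤ) (i : ℕ),
      (∑ᶠ j : ℕ, c * ((min i j : ℕ) : ℤ) * (m 1 j : ℤ))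
        = c * ((min i (k1 + k2) : ℕ) : ℤ) + c * ((min i k1 : ℕ) : ℤ) := by
    intro c i
    rw [hm c i 1 ({k1 + k2, k1} : Multiset ℕ) (fun j => by simp [m])]
    simp
  have hv0 : ∀ i : ℕ, vacancy cartanD43 L m 0 i =
      3 * ((min i (k1 + k2) : ℕ) : ℤ) - 2 * ((min i k : ℕ) : ℤ)
        - ((min i k1 : ℕ) : ℤ) := by
    intro i
    rw [vacancy, Fin.sum_univ_two, hL0]
    have c00 : cartanD43 0 0 = 2 := rfl
    have c01 : cartanD43 0 1 = -3 := rfl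
    rw [c00, c01, hm0, hm1]
    ring
  have hv1 : ∀ i : ℕ, vacancy cartanD43 L m 1 i =
      ((min i s : ℕ) : ℤ) + ((min i k : ℕ) : ℤ)
        - 2 * ((min i (k1 + k2) : ℕ) : ℤ) := by
    intro i
    rw [vacancy, Fin.sum_univ_two, hL1]
    have c10 : cartanD43 1 0 = -1 := rfl
    have c11 : cartanD43 1 1 = 2 := rfl
    rw [c10, c11, hm0, hm1]
    ring
  refine ⟨hv0, hv1, ?_, ?_, ?_, ?_, ?_⟩
  · rw [hv0 k]
    have h1 : min k (k1 + k2) = k1 + k2 := min_eq_right (by omega)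
    have h2 : min k k = k := min_self k
    have h3 : min k k1 = k1 := min_eq_right (by omega)
    rw [h1, h2, h3]; show 3*((k1+k2:ℕ):ℤ) - 2*((k1+k2+k3:ℕ):ℤ) - (k1:ℤ) = _; push_cast; ring
  · rw [hv0 k1]
    have h1 : min k1 (k1 + k2) = k1 := min_eq_left (by omega)
    have h3 : min k1 k = k1 := min_eq_left (by omega)
    rw [h1, h3, min_self]; ring
  · rw [hv1 (k1 + k2)]
    rw [min_eq_left h, min_eq_left (by omega : k1 + k2 ≤ k), min_self]; ring
  · rw [hv1 k1]
    rw [min_eq_left (by omega : k1 ≤ s), min_eq_left (by omega : k1 ≤ k),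
      min_eq_left (by omega : k1 ≤ k1 + k2)]; ring
  · intro i hi
    rw [hv1 i]
    rw [min_eq_left (by omega : i ≤ s), min_eq_left (by omega : i ≤ k),
      min_eq_left hi]; ring
end

section
/- In type D_4^{(3)} let the classical Cartan matrix entries be A_{11} = A_{22} = 2, A_{12} = −3, A_{21} = −1. Fix integers 0 ≤ k ≤ s. Let L be the multiplicity array with L_s^{(1)} = 1 and all other entries 0, let ν^{(1)} be the partition (s−k, s−k) and ν^{(2)} the partition (s−k). Then for every i ≥ 1 the vacancy numbers satisfy p_i^{(1)} = min(i, s) − min(i, s−k) ≥ 0 and p_i^{(2)} = 0; in particular p_{s−k}^{(1)} = 0 and p_{s−k}^{(2)} = 0, so assigning all riggings equal to 0 yields a highest weight rigged configuration. -/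
lemma finsum_point (f : ℕ → ℤ) (t : ℕ) (hf : ∀ j, j ≠ t → f j = 0) :
    ∑ᶠ j : ℕ, f j = f t := finsum_eq_single f t hf

/-- Vacancy numbers of the configuration `ν⁽¹⁾ = (s-k, s-k)`, `ν⁽²⁾ = (s-k)` with
multiplicity array `L_s^{(1)} = 1`: for all `i ≥ 1`,
`p_i^{(1)} = min(i,s) - min(i,s-k) ≥ 0` and `p_i^{(2)} = 0`; in particular
`p_{s-k}^{(1)} = 0` and `p_{s-k}^{(2)} = 0`, so all riggings `0` gives a highest
weight rigged configuration. -/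
theorem stmt4 (s k : ℕ) (h : k ≤ s) :
    let L : Fin 2 → ℕ → ℕ := fun a i => if a = 0 ∧ i = s then 1 else 0
    let m : Fin 2 → ℕ → ℕ := fun a i =>
      if a = 0 then Multiset.count i ({s - k, s - k} : Multiset ℕ)
      else Multiset.count i ({s - k} : Multiset ℕ)
    (∀ i : ℕ, 1 ≤ i →
        vacancy cartanD43 L m 0 i = ((min i s : ℕ) : ℤ) - ((min i (s - k) : ℕ) : ℤ) ∧
        0 ≤ vacancy cartanD43 L m 0 i ∧
        vacancy cartanD43 L m 1 i = 0) ∧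
    vacancy cartanD43 L m 0 (s - k) = 0 ∧
    vacancy cartanD43 L m 1 (s - k) = 0 := by
  intro L m
  have hmin : min (s-k) s = s - k := min_eq_left (Nat.sub_le s k)
  have key : ∀ a : Fin 2, ∀ i : ℕ,
      vacancy cartanD43 L m a i =
        (if a = 0 then ((min i s : ℕ) : ℤ) - ((min i (s-k) : ℕ) : ℤ) else 0) := by
    intro a i
    have hL : ∀ b : Fin 2, (∑ᶠ j : ℕ, ((min i j : ℕ) : ℤ) * (L b j : ℤ)) =
        if b = 0 then ((min i s : ℕ) : ℤ) else 0 := by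
      intro b
      rw [finsum_point _ s]
      · simp [L]
      · intro j hj
        simp [L, hj]
    have hm : ∀ a b : Fin 2,
        (∑ᶠ j : ℕ, cartanD43 a b * ((min i j : ℕ) : ℤ) * (m b j : ℤ)) =
          cartanD43 a b * ((min i (s-k) : ℕ) : ℤ) * (if b = 0 then 2 else 1) := by
      intro a b
      rw [finsum_point _ (s-k)]
      · fin_cases b <;> simp [m]
      · intro j hj
        fin_cases b <;> simp [m, hj]
    unfold vacancy
    rw [hL, Fin.sum_univ_two, hm, hm]
    fin_cases a <;> simp [cartanD43] <;> ring
  refine ⟨fun i _ => ⟨key 0 i, ?_, by simpa using key 1 i⟩, ?_, by simpa using key 1 (s-k)⟩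
  · rw [key 0 i]
    simp only [if_pos rfl, sub_nonneg, Nat.cast_le, if_true]
    exact min_le_min_left i (Nat.sub_le s k)
  · rw [key 0 (s-k)]
    simp [hmin]
end

section
/- In type D_4^{(3)} let the classical Cartan matrix entries be A_{11} = A_{22} = 2, A_{12} = −3, A_{21} = −1. Let L = (L_i^{(a)}) be a multiplicity array with L_1^{(2)} ≥ 1 and let m = (m_i^{(a)}) be finitely supported nonnegative integer data. Define L' by L'^{(1)}_1 = L^{(1)}_1 + 2, L'^{(2)}_1 = L^{(2)}_1 − 1 and L'^{(a)}_i = L^{(a)}_i otherwise, and define m' by m'^{(1)}_1 = m^{(1)}_1 + 1 and m'^{(a)}_i = m^{(a)}_i otherwise. Then the vacancy numbers are unchanged: p'^{(a)}_i = p^{(a)}_i for all a ∈ {1,2} and all i ≥ 1. -/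
lemma sum_eq_except_one {s : Finset ℕ} (h1 : (1:ℕ) ∈ s) (f g : ℕ → ℤ)
    (h : ∀ j ∈ s, j ≠ 1 → f j = g j) :
    ∑ j ∈ s, f j = (∑ j ∈ s, g j) + (f 1 - g 1) := by
  rw [← Finset.add_sum_erase s f h1, ← Finset.add_sum_erase s g h1]
  have : ∑ j ∈ s.erase 1, f j = ∑ j ∈ s.erase 1, g j :=
    Finset.sum_congr rfl fun j hj =>
      h j (Finset.mem_of_mem_erase hj) (Finset.ne_of_mem_erase hj)
  rw [this]; ring

/-- The left-box map `lt` (replace `L₁⁽²⁾ ↦ L₁⁽²⁾ - 1`, `L₁⁽¹⁾ ↦ L₁⁽¹⁾ + 2`, add a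
part of length `1` to `ν⁽¹⁾`) preserves all vacancy numbers. -/
theorem stmt6 (L m : Fin 2 → ℕ → ℕ)
    (hL : ∀ a, (Function.support (L a)).Finite)
    (hm : ∀ a, (Function.support (m a)).Finite)
    (h1 : 1 ≤ L 1 1) :
    let L' : Fin 2 → ℕ → ℕ := fun a i =>
      if a = 0 ∧ i = 1 then L a i + 2
      else if a = 1 ∧ i = 1 then L a i - 1
      else L a i
    let m' : Fin 2 → ℕ → ℕ := fun a i => if a = 0 ∧ i = 1 then m a i + 1 else m a i
    ∀ a : Fin 2, ∀ i : ℕ, 1 ≤ i →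
      vacancy cartanD43 L' m' a i = vacancy cartanD43 L m a i := by
  intro L' m' a i hi
  -- finite sets covering all supports
  set sL : Fin 2 → Finset ℕ := fun b => insert 1 (hL b).toFinset with hsL
  set sm : Fin 2 → Finset ℕ := fun b => insert 1 (hm b).toFinset with hsm
  have h1L : ∀ b, (1:ℕ) ∈ sL b := fun b => Finset.mem_insert_self _ _
  have h1m : ∀ b, (1:ℕ) ∈ sm b := fun b => Finset.mem_insert_self _ _
  have memL : ∀ b j, L b j ≠ 0 → j ∈ sL b := by
    intro b j hj
    exact Finset.mem_insert_of_mem ((hL b).mem_toFinset.2 hj)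
  have memm : ∀ b j, m b j ≠ 0 → j ∈ sm b := by
    intro b j hj
    exact Finset.mem_insert_of_mem ((hm b).mem_toFinset.2 hj)
  have hL'supp : ∀ b, Function.support
      (fun j => ((min i j : ℕ) : ℤ) * (L' b j : ℤ)) ⊆ (sL b : Set ℕ) := by
    intro b j hj
    simp only [Function.mem_support] at hj
    by_cases hj1 : j = 1
    · subst hj1; exact h1L b
    · apply memL b j
      intro h0
      apply hj
      have : L' b j = L b j := by simp [L', hj1]
      rw [this, h0]; simp
  have hLsupp : ∀ b, Function.support
      (fun j => ((min i j : ℕ) : ℤ) * (L b j : ℤ)) ⊆ (sL b : Set ℕ) := by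
    intro b j hj
    simp only [Function.mem_support] at hj
    apply memL b j
    intro h0; apply hj; rw [h0]; simp
  have hm'supp : ∀ b c, Function.support
      (fun j => c * ((min i j : ℕ) : ℤ) * (m' b j : ℤ)) ⊆ (sm b : Set ℕ) := by
    intro b c j hj
    simp only [Function.mem_support] at hj
    by_cases hj1 : j = 1
    · subst hj1; exact h1m b
    · apply memm b j
      intro h0
      apply hj
      have : m' b j = m b j := by simp [m', hj1]
      rw [this, h0]; simp
  have hmsupp : ∀ b c, Function.support
      (fun j => c * ((min i j : ℕ) : ℤ) * (m b j : ℤ)) ⊆ (sm b : Set ℕ) := by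
    intro b c j hj
    simp only [Function.mem_support] at hj
    apply memm b j
    intro h0; apply hj; rw [h0]; simp
  have hmin1 : min i 1 = 1 := by omega
  unfold vacancy
  rw [finsum_eq_finset_sum_of_support_subset _ (hL'supp a),
      finsum_eq_finset_sum_of_support_subset _ (hLsupp a)]
  rw [Fin.sum_univ_two, Fin.sum_univ_two,
      finsum_eq_finset_sum_of_support_subset _ (hm'supp 0 (cartanD43 a 0)),
      finsum_eq_finset_sum_of_support_subset _ (hm'supp 1 (cartanD43 a 1)),
      finsum_eq_finset_sum_of_support_subset _ (hmsupp 0 (cartanD43 a 0)),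
      finsum_eq_finset_sum_of_support_subset _ (hmsupp 1 (cartanD43 a 1))]
  have eL : ∑ j ∈ sL a, ((min i j : ℕ) : ℤ) * (L' a j : ℤ)
      = (∑ j ∈ sL a, ((min i j : ℕ) : ℤ) * (L a j : ℤ))
        + (((min i 1 : ℕ) : ℤ) * (L' a 1 : ℤ) - ((min i 1 : ℕ) : ℤ) * (L a 1 : ℤ)) :=
    sum_eq_except_one (h1L a) _ _ (fun j _ hj => by simp [L', hj])
  have em0 : ∑ j ∈ sm 0, cartanD43 a 0 * ((min i j : ℕ) : ℤ) * (m' 0 j : ℤ)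
      = (∑ j ∈ sm 0, cartanD43 a 0 * ((min i j : ℕ) : ℤ) * (m 0 j : ℤ))
        + (cartanD43 a 0 * ((min i 1 : ℕ) : ℤ) * (m' 0 1 : ℤ)
          - cartanD43 a 0 * ((min i 1 : ℕ) : ℤ) * (m 0 1 : ℤ)) :=
    sum_eq_except_one (h1m 0) _ _ (fun j _ hj => by simp [m', hj])
  have em1 : ∑ j ∈ sm 1, cartanD43 a 1 * ((min i j : ℕ) : ℤ) * (m' 1 j : ℤ)
      = ∑ j ∈ sm 1, cartanD43 a 1 * ((min i j : ℕ) : ℤ) * (m 1 j : ℤ) :=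
    Finset.sum_congr rfl (fun j _ => by simp [m'])
  rw [eL, em0, em1, hmin1]
  fin_cases a <;>
    simp [L', m', cartanD43, Nat.cast_sub h1] <;> ring
end

section
/- In type D_4^{(3)} with classical Cartan matrix entries A_{11} = A_{22} = 2, A_{12} = −3, A_{21} = −1 and bilinear form (α_1|α_1) = 2, (α_1|α_2) = (α_2|α_1) = −3, (α_2|α_2) = 6, let L = (L_i^{(a)}) be a multiplicity array with L_1^{(2)} ≥ 1, let m = (m_i^{(a)}) be finitely supported nonnegative integer multiplicities, and let R be the sum of the riggings. Apply the left-box map: set L'^{(1)}_1 = L^{(1)}_1 + 2, L'^{(2)}_1 = L^{(2)}_1 − 1, m'^{(1)}_1 = m^{(1)}_1 + 1 (all other entries unchanged), keep all old riggings, and attach to the new part of length 1 of ν^{(1)} the rigging p'^{(1)}_1 (the new vacancy number, making the new string singular). Then the cocharge changes by cc(ν', J') − cc(ν, J) = 1 + Σ_{j ≥ 1} L_j^{(1)}; explicitly, cc(ν') + p'^{(1)}_1 = cc(ν) + 1 + Σ_{j≥1} L_j^{(1)}, where p'^{(1)}_1 = Σ_{j≥1} L_j^{(1)} − 2 Σ_{j≥1}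 m_j^{(1)} + 3 Σ_{j≥1} m_j^{(2)}. -/
/-- The normalized symmetric bilinear form on the simple roots of `G₂`:
`(α₁|α₁) = 2`, `(α₁|α₂) = (α₂|α₁) = -3`, `(α₂|α₂) = 6`. -/
def bilinG2 : Fin 2 → Fin 2 → ℤ :=
  fun a b => if a = b then (if a = 0 then 2 else 6) else -3

/-- The cocharge of a configuration with part multiplicities `m`:
`cc(ν) = (1/2) Σ_{a,b} Σ_{i,j} (α_a|α_b) min(i,j) m_i^{(a)} m_j^{(b)}`. -/
noncomputable def cochargeConfig (B : Fin 2 → Fin 2 → ℤ) (m : Fin 2 → ℕ → ℕ) : ℚ :=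
  (1 / 2 : ℚ) * ∑ a : Fin 2, ∑ b : Fin 2, ∑ᶠ i : ℕ, ∑ᶠ j : ℕ,
    (B a b : ℚ) * ((min i j : ℕ) : ℚ) * (m a i : ℚ) * (m b j : ℚ)

private lemma sumShift1 (T : Finset ℕ) (h1 : (1:ℕ) ∈ T) (k f : ℕ → ℚ) :
    (∑ i ∈ T, k i * (f i + if i = 1 then 1 else 0))
      = (∑ i ∈ T, k i * f i) + k 1 := by
  simp only [mul_add, Finset.sum_add_distrib, mul_ite, mul_one, mul_zero,
    Finset.sum_ite_eq', h1, if_true]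

private lemma sumShiftR (T : Finset ℕ) (h1 : (1:ℕ) ∈ T) (K : ℕ → ℕ → ℚ) (f g : ℕ → ℚ) :
    (∑ i ∈ T, ∑ j ∈ T, K i j * f i * (g j + if j = 1 then 1 else 0))
      = (∑ i ∈ T, ∑ j ∈ T, K i j * f i * g j) + ∑ i ∈ T, K i 1 * f i := by
  rw [← Finset.sum_add_distrib]
  refine Finset.sum_congr rfl fun i _ => ?_
  have h := sumShift1 T h1 (fun j => K i j * f i) g
  simp only [mul_assoc, mul_comm, mul_left_comm] at h ⊢
  -- fallback: direct
  simpa using h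

private lemma sumShiftL (T : Finset ℕ) (h1 : (1:ℕ) ∈ T) (K : ℕ → ℕ → ℚ) (f g : ℕ → ℚ) :
    (∑ i ∈ T, ∑ j ∈ T, K i j * (f i + if i = 1 then 1 else 0) * g j)
      = (∑ i ∈ T, ∑ j ∈ T, K i j * f i * g j) + ∑ j ∈ T, K 1 j * g j := by
  simp only [mul_add, add_mul, mul_ite, ite_mul, mul_one, mul_zero, one_mul, zero_mul,
    Finset.sum_add_distrib]
  congr 1
  rw [Finset.sum_comm]
  simp [Finset.sum_ite_eq', h1]

private lemma sumShiftLR (T : Finset ℕ) (h1 : (1:ℕ) ∈ T) (K : ℕ → ℕ → ℚ) (f g : ℕ → ℚ) :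
    (∑ i ∈ T, ∑ j ∈ T,
        K i j * (f i + if i = 1 then 1 else 0) * (g j + if j = 1 then 1 else 0))
      = (∑ i ∈ T, ∑ j ∈ T, K i j * f i * g j)
        + (∑ j ∈ T, K 1 j * g j) + (∑ i ∈ T, K i 1 * f i) + K 1 1 := by
  rw [sumShiftR T h1 K (fun i => f i + if i = 1 then 1 else 0) g]
  rw [sumShiftL T h1 K f g]
  rw [sumShift1 T h1 (fun i => K i 1) f]
  ring

/-- Under the left-box map (which keeps all old riggings and attaches the rigging
`p'₁⁽¹⁾` to the new part of length `1` of `ν⁽¹⁾`), the cocharge changes by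
`1 + Σ_j L_j^{(1)}`: explicitly `cc(ν') + p'₁⁽¹⁾ = cc(ν) + 1 + Σ_j L_j^{(1)}`,
where `p'₁⁽¹⁾ = Σ_j L_j^{(1)} - 2 Σ_j m_j^{(1)} + 3 Σ_j m_j^{(2)}`. -/
theorem stmt7 (L m : Fin 2 → ℕ → ℕ)
    (hL : ∀ a, (Function.support (L a)).Finite)
    (hm : ∀ a, (Function.support (m a)).Finite)
    (hL0 : ∀ a, L a 0 = 0) (hm0 : ∀ a, m a 0 = 0)
    (h1 : 1 ≤ L 1 1) :
    let L' : Fin 2 → ℕ → ℕ := fun a i =>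
      if a = 0 ∧ i = 1 then L a i + 2
      else if a = 1 ∧ i = 1 then L a i - 1
      else L a i
    let m' : Fin 2 → ℕ → ℕ := fun a i => if a = 0 ∧ i = 1 then m a i + 1 else m a i
    vacancy cartanD43 L' m' 0 1 =
      (∑ᶠ j : ℕ, (L 0 j : ℤ)) - 2 * (∑ᶠ j : ℕ, (m 0 j : ℤ))
        + 3 * (∑ᶠ j : ℕ, (m 1 j : ℤ)) ∧
    cochargeConfig bilinG2 m' + (vacancy cartanD43 L' m' 0 1 : ℚ) =
      cochargeConfig bilinG2 m + 1 + ∑ᶠ j : ℕ, (L 0 j : ℚ) := by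
  intro L' m'
  classical
  set T : Finset ℕ :=
    (((hL 0).toFinset ∪ (hL 1).toFinset) ∪ ((hm 0).toFinset ∪ (hm 1).toFinset)) ∪ {0, 1}
    with hTdef
  have h1T : (1 : ℕ) ∈ T := by simp [hTdef]
  have hLmem : ∀ a j, L a j ≠ 0 → j ∈ T := by
    intro a j h
    fin_cases a <;>
      simp only [hTdef, Finset.mem_union, Set.Finite.mem_toFinset, Function.mem_support] <;>
      tauto
  have hmmem : ∀ a j, m a j ≠ 0 → j ∈ T := by
    intro a j h
    fin_cases a <;>
      simp only [hTdef, Finset.mem_union, Set.Finite.mem_toFinset, Function.mem_support] <;>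
      tauto
  have hL'0mem : ∀ j, L' 0 j ≠ 0 → j ∈ T := by
    intro j h
    by_cases hj : j = 1
    · simp [hTdef, hj]
    · apply hLmem 0 j; simpa [L', hj] using h
  have hm'mem : ∀ a j, m' a j ≠ 0 → j ∈ T := by
    intro a j h
    fin_cases a
    · by_cases hj : j = 1
      · simp [hTdef, hj]
      · apply hmmem 0 j; simpa [m', hj] using h
    · apply hmmem 1 j; simpa [m'] using h
  -- generic finsum → finset sum conversion
  have conv : ∀ {M : Type} [AddCommMonoid M] (f : ℕ → M),
      (∀ j, f j ≠ 0 → j ∈ T) → ∑ᶠ j, f j = ∑ j ∈ T, f j := by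
    intro M _ f h
    exact finsum_eq_finset_sum_of_support_subset f (fun j hj => Finset.mem_coe.mpr (h j hj))
  -- m' pointwise values
  have q0 : ∀ i, ((m' 0 i : ℕ) : ℚ) = (m 0 i : ℚ) + (if i = 1 then 1 else 0) := by
    intro i; by_cases h : i = 1 <;> simp [m', h]
  have q1 : ∀ i, ((m' 1 i : ℕ) : ℚ) = (m 1 i : ℚ) := by
    intro i; simp [m']
  -- vacancy computation
  have c00 : cartanD43 0 0 = 2 := rfl
  have c01 : cartanD43 0 1 = -3 := rfl
  have hvacT : vacancy cartanD43 L' m' 0 1 =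
      (∑ j ∈ T, (L 0 j : ℤ)) - 2 * (∑ j ∈ T, (m 0 j : ℤ)) + 3 * (∑ j ∈ T, (m 1 j : ℤ)) := by
    unfold vacancy
    rw [Fin.sum_univ_two, c00, c01]
    rw [conv (fun j => ((min 1 j : ℕ) : ℤ) * (L' 0 j : ℤ))
        (fun j hj => hL'0mem j (fun h0 => hj (by simp [h0])))]
    rw [conv (fun j => (2 : ℤ) * ((min 1 j : ℕ) : ℤ) * (m' 0 j : ℤ))
        (fun j hj => hm'mem 0 j (fun h0 => hj (by simp [h0])))]
    rw [conv (fun j => (-3 : ℤ) * ((min 1 j : ℕ) : ℤ) * (m' 1 j : ℤ))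
        (fun j hj => hm'mem 1 j (fun h0 => hj (by simp [h0])))]
    have p1 : ∀ j, ((min 1 j : ℕ) : ℤ) * (L' 0 j : ℤ)
        = (L 0 j : ℤ) + (if j = 1 then 2 else 0) := by
      intro j
      match j with
      | 0 => simp [L', hL0]
      | 1 => simp [L']
      | (k+2) => simp [L', Nat.min_eq_left (by omega : 1 ≤ k + 2)]
    have p2 : ∀ j, (2 : ℤ) * ((min 1 j : ℕ) : ℤ) * (m' 0 j : ℤ)
        = 2 * (m 0 j : ℤ) + (if j = 1 then 2 else 0) := by
      intro j
      match j with
      | 0 => simp [m', hm0]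
      | 1 => simp [m']; push_cast; ring
      | (k+2) => simp [m', Nat.min_eq_left (by omega : 1 ≤ k + 2)]
    have p3 : ∀ j, (-3 : ℤ) * ((min 1 j : ℕ) : ℤ) * (m' 1 j : ℤ)
        = -3 * (m 1 j : ℤ) := by
      intro j
      match j with
      | 0 => simp [m', hm0]
      | 1 => simp [m']
      | (k+2) => simp [m', Nat.min_eq_left (by omega : 1 ≤ k + 2)]
    simp only [p1, p2, p3, Finset.sum_add_distrib, Finset.sum_ite_eq', h1T, if_true]
    simp only [← Finset.mul_sum]
    ring
  constructor
  · rw [hvacT, conv (fun j => (L 0 j : ℤ)) (fun j hj => hLmem 0 j (by simpa using hj)),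
      conv (fun j => (m 0 j : ℤ)) (fun j hj => hmmem 0 j (by simpa using hj)),
      conv (fun j => (m 1 j : ℤ)) (fun j hj => hmmem 1 j (by simpa using hj))]
  · -- cocharge conversion
    have ccT : ∀ (mm : Fin 2 → ℕ → ℕ), (∀ a j, mm a j ≠ 0 → j ∈ T) →
        cochargeConfig bilinG2 mm = (1/2 : ℚ) * ∑ a : Fin 2, ∑ b : Fin 2, ∑ i ∈ T, ∑ j ∈ T,
          (bilinG2 a b : ℚ) * ((min i j : ℕ) : ℚ) * (mm a i : ℚ) * (mm b j : ℚ) := by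
      intro mm hmm
      unfold cochargeConfig
      congr 1
      refine Finset.sum_congr rfl fun a _ => Finset.sum_congr rfl fun b _ => ?_
      rw [conv _ (fun i hi => hmm a i (fun h0 => hi (by simp [h0])))]
      refine Finset.sum_congr rfl fun i _ => ?_
      rw [conv _ (fun j hj => hmm b j (fun h0 => hj (by simp [h0])))]
    have b00 : ((bilinG2 0 0 : ℤ) : ℚ) = 2 := by norm_num [bilinG2]
    have b01 : ((bilinG2 0 1 : ℤ) : ℚ) = -3 := by norm_num [bilinG2]
    have b10 : ((bilinG2 1 0 : ℤ) : ℚ) = -3 := by norm_num [bilinG2]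
    have b11 : ((bilinG2 1 1 : ℤ) : ℚ) = 6 := by norm_num [bilinG2]
    rw [ccT m' hm'mem, ccT m hmmem, hvacT,
      conv (fun j => (L 0 j : ℚ)) (fun j hj => hLmem 0 j (by simpa using hj))]
    push_cast
    simp only [Fin.sum_univ_two, b00, b01, b10, b11, q0, q1]
    rw [sumShiftLR T h1T (fun i j => (2 : ℚ) * ((i : ℚ) ⊓ (j : ℚ)))
        (fun i => (m 0 i : ℚ)) (fun j => (m 0 j : ℚ))]
    rw [sumShiftL T h1T (fun i j => (-3 : ℚ) * ((i : ℚ) ⊓ (j : ℚ)))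
        (fun i => (m 0 i : ℚ)) (fun j => (m 1 j : ℚ))]
    rw [sumShiftR T h1T (fun i j => (-3 : ℚ) * ((i : ℚ) ⊓ (j : ℚ)))
        (fun i => (m 1 i : ℚ)) (fun j => (m 0 j : ℚ))]
    simp only [Nat.cast_one]
    have rA : ∀ j : ℕ, (2 : ℚ) * ((1 : ℚ) ⊓ (j : ℚ)) * (m 0 j : ℚ) = 2 * (m 0 j : ℚ) := by
      intro j
      match j with
      | 0 => simp [hm0]
      | (k+1) =>
        have hle : (1 : ℚ) ≤ ((k+1 : ℕ) : ℚ) := by exact_mod_cast Nat.succ_le_succ (Nat.zero_le k)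
        rw [inf_eq_left.mpr hle, mul_one]
    have rB : ∀ j : ℕ, (2 : ℚ) * ((j : ℚ) ⊓ (1 : ℚ)) * (m 0 j : ℚ) = 2 * (m 0 j : ℚ) := by
      intro j
      match j with
      | 0 => simp [hm0]
      | (k+1) =>
        have hle : (1 : ℚ) ≤ ((k+1 : ℕ) : ℚ) := by exact_mod_cast Nat.succ_le_succ (Nat.zero_le k)
        rw [inf_eq_right.mpr hle, mul_one]
    have rC : ∀ j : ℕ, (-3 : ℚ) * ((1 : ℚ) ⊓ (j : ℚ)) * (m 1 j : ℚ) = -3 * (m 1 j : ℚ) := by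
      intro j
      match j with
      | 0 => simp [hm0]
      | (k+1) =>
        have hle : (1 : ℚ) ≤ ((k+1 : ℕ) : ℚ) := by exact_mod_cast Nat.succ_le_succ (Nat.zero_le k)
        rw [inf_eq_left.mpr hle, mul_one]
    have rD : ∀ j : ℕ, (-3 : ℚ) * ((j : ℚ) ⊓ (1 : ℚ)) * (m 1 j : ℚ) = -3 * (m 1 j : ℚ) := by
      intro j
      match j with
      | 0 => simp [hm0]
      | (k+1) =>
        have hle : (1 : ℚ) ≤ ((k+1 : ℕ) : ℚ) := by exact_mod_cast Nat.succ_le_succ (Nat.zero_le k)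
        rw [inf_eq_right.mpr hle, mul_one]
    simp only [rA, rB, rC, rD, inf_idem]
    simp only [← Finset.mul_sum]
    ring
end

section
/- Fix a nonnegative integer s. Let A_s = {(r_1,r_2,r_3,r_4) ∈ ℤ_{≥0}^4 : r_4 ≤ r_2 and 2r_1 + 3r_2 + 3r_3 ≤ s} and let K'_s = {(k_1,k_2,k_3,k_4) ∈ ℤ_{≥0}^4 : 3 divides k_1, k_4 ≤ k_3 ≤ k_2, and k_1 + 2k_2 + k_3 ≤ s}. Then the map Ψ(r_1,r_2,r_3,r_4) = (3r_4, r_1 + r_2 + r_3 − r_4, r_2 + r_3 − r_4, r_3) is a well-defined bijection from A_s onto K'_s, and writing Ψ(r) = (k_1,k_2,k_3,k_4) one has k_1 + k_2 + k_4 = r_1 + r_2 + 2r_3 + 2r_4, k_1 + k_2 + 2k_3 = r_1 + 3r_2 + 3r_3, and k_3 = r_2 + r_3 − r_4. -/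
/-- `A_s = {(r₁,r₂,r₃,r₄) ∈ ℤ_{≥0}⁴ : r₄ ≤ r₂ ∧ 2r₁ + 3r₂ + 3r₃ ≤ s}`. -/
def AsetG (s : ℕ) : Set (ℕ × ℕ × ℕ × ℕ) :=
  {r | r.2.2.2 ≤ r.2.1 ∧ 2 * r.1 + 3 * r.2.1 + 3 * r.2.2.1 ≤ s}

/-- `K'_s = {(k₁,k₂,k₃,k₄) ∈ ℤ_{≥0}⁴ : 3 ∣ k₁ ∧ k₄ ≤ k₃ ≤ k₂ ∧ k₁ + 2k₂ + k₃ ≤ s}`. -/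
def KsetG (s : ℕ) : Set (ℕ × ℕ × ℕ × ℕ) :=
  {k | 3 ∣ k.1 ∧ k.2.2.2 ≤ k.2.2.1 ∧ k.2.2.1 ≤ k.2.1 ∧ k.1 + 2 * k.2.1 + k.2.2.1 ≤ s}

/-- `Ψ(r₁,r₂,r₃,r₄) = (3r₄, r₁ + r₂ + r₃ - r₄, r₂ + r₃ - r₄, r₃)`. -/
def PsiG (r : ℕ × ℕ × ℕ × ℕ) : ℕ × ℕ × ℕ × ℕ :=
  (3 * r.2.2.2, r.1 + r.2.1 + r.2.2.1 - r.2.2.2, r.2.1 + r.2.2.1 - r.2.2.2, r.2.2.1)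

/-- `Ψ` is a bijection from `A_s` onto `K'_s` matching the statistics
`k₁ + k₂ + k₄ = r₁ + r₂ + 2r₃ + 2r₄`, `k₁ + k₂ + 2k₃ = r₁ + 3r₂ + 3r₃` and
`k₃ = r₂ + r₃ - r₄`. -/
theorem stmt10 (s : ℕ) :
    Set.BijOn PsiG (AsetG s) (KsetG s) ∧
    ∀ r ∈ AsetG s,
      (PsiG r).1 + (PsiG r).2.1 + (PsiG r).2.2.2 =
        r.1 + r.2.1 + 2 * r.2.2.1 + 2 * r.2.2.2 ∧
      (PsiG r).1 + (PsiG r).2.1 + 2 * (PsiG r).2.2.1 =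
        r.1 + 3 * r.2.1 + 3 * r.2.2.1 ∧
      (PsiG r).2.2.1 = r.2.1 + r.2.2.1 - r.2.2.2 := by
  refine ⟨⟨?_, ?_, ?_⟩, ?_⟩
  · rintro ⟨r1, r2, r3, r4⟩ ⟨h1, h2⟩
    simp only [AsetG, KsetG, PsiG, Set.mem_setOf_eq] at *
    refine ⟨⟨r4, rfl⟩, ?_, ?_, ?_⟩ <;> omega
  · rintro ⟨r1, r2, r3, r4⟩ hr ⟨r1', r2', r3', r4'⟩ hr' heq
    simp only [AsetG, Set.mem_setOf_eq] at hr hr'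
    simp only [PsiG, Prod.mk.injEq, and_true] at heq ⊢
    omega
  · rintro ⟨k1, k2, k3, k4⟩ hk
    simp only [KsetG, Set.mem_setOf_eq] at hk
    obtain ⟨⟨m, hm⟩, h2, h3, h4⟩ := hk
    refine ⟨(k2 - k3, k3 - k4 + m, k4, m), ?_, ?_⟩
    · simp only [AsetG, Set.mem_setOf_eq]
      omega
    · simp only [PsiG, Prod.mk.injEq, and_true]
      omega
  · rintro ⟨r1, r2, r3, r4⟩ ⟨h1, h2⟩
    simp only [AsetG, Set.mem_setOf_eq] at h1 h2
    simp only [PsiG, and_true]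
    refine ⟨?_, ?_⟩ <;> omega
end
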